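/- Let μ be a probability measure on ℝ with finite first moment and let N ≥ 1. Define θ*_i = F_μ⁻¹((2i − 1)/(2N)) for i = 1, …, N and the quantile distribution Z_{θ*} = (1/N) ∑_{i=1}^N δ_{θ*_i}. Then for every θ ∈ ℝ^N with quantile distribution Z_θ = (1/N) ∑_{i=1}^N δ_{θ_i}, we have W_1(μ, Z_{θ*}) ≤ W_1(μ, Z_θ); that is, Z_{θ*} achieves the minimal 1-Wasserstein distance from μ among all uniform mixtures of N Diracs. -/

import Mathlib

/-!
After sorting the atoms, the quantile function of `Z_θ` is the step function equal to `θ_k` on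
`(k/N, (k+1)/N]`, so `W₁(μ, Z_θ)` is a sum over the `N` cells of `∫ |F_μ⁻¹ - θ_k|`, and each
summand can be minimized separately. On a cell, the monotone function `F_μ⁻¹` takes a median value
at the midpoint of the cell, and a median minimizes the mean absolute deviation. All these
integrals are finite because `F_μ⁻¹` pushes Lebesgue measure on `(0, 1)` forward to `μ`, which
has a finite first moment.
-/

open MeasureTheory Set
open scoped ENNReal

/-- The CDF of a measure on ℝ: `F(y) = μ((-∞, y])`. -/
noncomputable def cdfFn (μ : Measure ℝ) (y : ℝ) : ℝ := (μ (Iic y)).toReal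

/-- The quantile function (generalized inverse CDF): `F⁻¹(ω) = inf {y | ω ≤ F(y)}`. -/
noncomputable def quantileFn (μ : Measure ℝ) (ω : ℝ) : ℝ := sInf {y : ℝ | ω ≤ cdfFn μ y}

/-- The quantile distribution with atoms `θ : Fin N → ℝ`, i.e. `(1/N) ∑ᵢ δ_{θᵢ}`. -/
noncomputable def quantDist {N : ℕ} (θ : Fin N → ℝ) : Measure ℝ :=
  (N : ℝ≥0∞)⁻¹ • ∑ i : Fin N, Measure.dirac (θ i)

/-- The 1-Wasserstein distance `W₁(μ, ν) = ∫_0^1 |F_μ⁻¹(ω) - F_ν⁻¹(ω)| dω`. -/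
noncomputable def W1 (μ ν : Measure ℝ) : ℝ :=
  ∫ ω in (0:ℝ)..1, |quantileFn μ ω - quantileFn ν ω|

open ProbabilityTheory
open scoped Finset

section QuantileFunction

variable {μ : Measure ℝ} [IsProbabilityMeasure μ] {ω : ℝ}

lemma cdfFn_eq_cdf (μ : Measure ℝ) [IsProbabilityMeasure μ] : cdfFn μ = cdf μ :=
  funext fun y => (cdf_eq_real μ y).symm

lemma nonempty_setOf_le_cdfFn (hω : ω < 1) : {y | ω ≤ cdfFn μ y}.Nonempty := by
  rw [cdfFn_eq_cdf]
  exact ((tendsto_cdf_atTop μ).eventually (eventually_ge_nhds hω)).exists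

lemma bddBelow_setOf_le_cdfFn (hω : 0 < ω) : BddBelow {y | ω ≤ cdfFn μ y} := by
  rw [cdfFn_eq_cdf]
  obtain ⟨y₀, hy₀⟩ := ((tendsto_cdf_atBot μ).eventually (eventually_lt_nhds hω)).exists
  exact ⟨y₀, fun y hy => le_of_not_gt fun hlt => (hy.trans (monotone_cdf μ hlt.le)).not_gt hy₀⟩

/-- The infimum is attained because the CDF is right-continuous. -/
lemma le_cdfFn_quantileFn (hω : ω ∈ Ioo 0 1) : ω ≤ cdfFn μ (quantileFn μ ω) := by
  rw [cdfFn_eq_cdf]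
  refine ge_of_tendsto (((cdf μ).right_continuous _).tendsto.mono_left
    (nhdsWithin_mono _ Ioi_subset_Ici_self)) ?_
  filter_upwards [self_mem_nhdsWithin] with y (hy : quantileFn μ ω < y)
  obtain ⟨z, hz, hzy⟩ := exists_lt_of_csInf_lt (nonempty_setOf_le_cdfFn hω.2) hy
  rw [mem_ofPred_eq, cdfFn_eq_cdf] at hz
  exact hz.trans (monotone_cdf μ hzy.le)

lemma quantileFn_le_iff (hω : ω ∈ Ioo 0 1) {y : ℝ} : quantileFn μ ω ≤ y ↔ ω ≤ cdfFn μ y := by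
  refine ⟨fun h => (le_cdfFn_quantileFn (μ := μ) hω).trans ?_,
    fun h => csInf_le (bddBelow_setOf_le_cdfFn hω.1) h⟩
  rw [cdfFn_eq_cdf]
  exact monotone_cdf μ h

lemma quantileFn_monotoneOn : MonotoneOn (quantileFn μ) (Ioo 0 1) :=
  fun _ h₁ _ h₂ h => csInf_le_csInf (bddBelow_setOf_le_cdfFn h₁.1) (nonempty_setOf_le_cdfFn h₂.2)
    fun _ hy => h.trans hy

lemma volume_Ioo_inter_Iic {t : ℝ} (ht : t ≤ 1) :
    volume (Ioo 0 1 ∩ Iic t) = ENNReal.ofReal t := by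
  rw [measure_congr ((Ioo_ae_eq_Ioc (μ := volume)).inter (ae_eq_refl (Iic t))), Ioc_inter_Iic,
    min_eq_right ht, Real.volume_Ioc, sub_zero]

lemma aemeasurable_quantileFn : AEMeasurable (quantileFn μ) (volume.restrict (Ioo 0 1)) :=
  aemeasurable_restrict_of_monotoneOn measurableSet_Ioo quantileFn_monotoneOn

lemma map_quantileFn_volume_Ioo :
    (volume.restrict (Ioo 0 1)).map (quantileFn μ) = μ := by
  have : IsProbabilityMeasure (volume.restrict (Ioo (0 : ℝ) 1)) := ⟨by simp⟩
  have := Measure.isProbabilityMeasure_map (μ := volume.restrict (Ioo (0 : ℝ) 1))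
    (aemeasurable_quantileFn (μ := μ))
  refine Measure.ext_of_Iic _ _ fun y => ?_
  have hpre : quantileFn μ ⁻¹' Iic y ∩ Ioo 0 1 = Ioo 0 1 ∩ Iic (cdfFn μ y) := by
    ext ω
    simp only [mem_inter_iff, mem_preimage, mem_Iic]
    exact ⟨fun h => ⟨h.2, (quantileFn_le_iff h.2).mp h.1⟩,
      fun h => ⟨(quantileFn_le_iff h.1).mpr h.2, h.1⟩⟩
  rw [Measure.map_apply_of_aemeasurable aemeasurable_quantileFn measurableSet_Iic,
    Measure.restrict_apply' measurableSet_Ioo, hpre, cdfFn_eq_cdf,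
    volume_Ioo_inter_Iic (cdf_le_one μ y), ofReal_cdf]

lemma intervalIntegrable_quantileFn (hint : Integrable (fun x : ℝ => x) μ) :
    IntervalIntegrable (quantileFn μ) volume 0 1 := by
  rw [intervalIntegrable_iff_integrableOn_Ioo_of_le zero_le_one]
  rw [← map_quantileFn_volume_Ioo (μ := μ)] at hint
  exact (integrable_map_measure aestronglyMeasurable_id aemeasurable_quantileFn).mp hint

end QuantileFunction

section QuantileDistribution

variable {N : ℕ}

lemma quantDist_comp_perm (θ : Fin N → ℝ) (σ : Equiv.Perm (Fin N)) :
    quantDist (θ ∘ σ) = quantDist θ := by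
  rw [quantDist, quantDist, Function.comp_def, Equiv.sum_comp σ fun i => Measure.dirac (θ i)]

lemma cdfFn_quantDist (c : Fin N → ℝ) (y : ℝ) :
    cdfFn (quantDist c) y = (#{i | c i ≤ y} : ℝ) / N := by
  have hdirac : ∀ i, Measure.dirac (c i) (Iic y) = if c i ≤ y then 1 else 0 := fun i => by
    rw [Measure.dirac_apply' _ measurableSet_Iic, indicator_apply]
    simp
  rw [cdfFn, quantDist, Measure.smul_apply, Measure.finsetSum_apply]
  simp only [hdirac, Finset.sum_boole, smul_eq_mul, ENNReal.toReal_mul, ENNReal.toReal_inv]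
  simp [div_eq_inv_mul]

lemma Monotone.lt_card_filter_le_iff {α : Type*} [LinearOrder α] {c : Fin N → α}
    (hc : Monotone c) (k : Fin N) (y : α) :
    k < #{i | c i ≤ y} ↔ c k ≤ y := by
  constructor
  · intro hk
    by_contra! hy
    have hsub : ({i | c i ≤ y} : Finset (Fin N)) ⊆ Finset.Iio k := fun i hi => by
      rw [Finset.mem_filter] at hi
      exact Finset.mem_Iio.mpr (lt_of_not_ge fun hki => (hy.trans_le (hc hki)).not_ge hi.2)
    have := Finset.card_le_card hsub
    rw [Fin.card_Iio] at this
    omega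
  · intro hy
    have hsub : Finset.Iic k ⊆ ({i | c i ≤ y} : Finset (Fin N)) := fun i hi =>
      Finset.mem_filter.mpr ⟨Finset.mem_univ _, (hc (Finset.mem_Iic.mp hi)).trans hy⟩
    have := Finset.card_le_card hsub
    rw [Fin.card_Iic] at this
    omega

lemma quantileFn_quantDist {c : Fin N → ℝ} (hc : Monotone c) (k : Fin N) {ω : ℝ}
    (hω : ω ∈ Ioc ((k : ℝ) / N) ((k + 1) / N)) :
    quantileFn (quantDist c) ω = c k := by
  have hN : (0 : ℝ) < N := by exact_mod_cast k.pos
  have hset : {y | ω ≤ cdfFn (quantDist c) y} = Ici (c k) := by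
    ext y
    rw [mem_ofPred_eq, mem_Ici, cdfFn_quantDist, ← hc.lt_card_filter_le_iff]
    constructor
    · intro h
      exact_mod_cast (div_lt_div_iff_of_pos_right hN).mp (hω.1.trans_le h)
    · intro h
      refine hω.2.trans (div_le_div_of_nonneg_right ?_ hN.le)
      exact_mod_cast h
  rw [quantileFn, hset, csInf_Ici]

end QuantileDistribution

section MedianMinimizesL1

variable {g : ℝ → ℝ} {a b c d : ℝ}

lemma integral_abs_sub_add_le_of_le (hab : a ≤ b) (hg : IntervalIntegrable g volume a b)
    (hgd : ∀ ω ∈ Ioo a b, g ω ≤ d) :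
    (∫ ω in a..b, |g ω - d|) + (b - a) * (c - d) ≤ ∫ ω in a..b, |g ω - c| := by
  have hint : ∀ e, IntervalIntegrable (fun ω => |g ω - e|) volume a b :=
    fun e => (hg.sub intervalIntegrable_const).abs
  rw [← smul_eq_mul, ← intervalIntegral.integral_const,
    ← intervalIntegral.integral_add (hint d) intervalIntegrable_const]
  refine intervalIntegral.integral_mono_on_of_le_Ioo hab ((hint d).add intervalIntegrable_const)
    (hint c) fun ω hω => ?_
  rw [abs_of_nonpos (sub_nonpos.mpr (hgd ω hω))]
  linarith [neg_abs_le (g ω - c)]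

lemma integral_abs_sub_add_le_of_ge (hab : a ≤ b) (hg : IntervalIntegrable g volume a b)
    (hdg : ∀ ω ∈ Ioo a b, d ≤ g ω) :
    (∫ ω in a..b, |g ω - d|) + (b - a) * (d - c) ≤ ∫ ω in a..b, |g ω - c| := by
  have h := integral_abs_sub_add_le_of_le (g := -g) (c := -c) hab hg.neg
    fun ω hω => neg_le_neg (hdg ω hω)
  simpa only [Pi.neg_apply, sub_neg_eq_add, neg_add_eq_sub, abs_sub_comm d, abs_sub_comm c] using h

lemma integral_abs_sub_midpoint_le (hab : a < b) (hmono : MonotoneOn g (Ioo a b))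
    (hg : IntervalIntegrable g volume a b) :
    ∫ ω in a..b, |g ω - g ((a + b) / 2)| ≤ ∫ ω in a..b, |g ω - c| := by
  set m := (a + b) / 2 with hm_def
  have ham : a < m := left_lt_add_div_two.mpr hab
  have hmb : m < b := add_div_two_lt_right.mpr hab
  have hm : m ∈ Ioo a b := ⟨ham, hmb⟩
  have hm' : m ∈ uIcc a b := mem_uIcc_of_le ham.le hmb.le
  have hg₁ : IntervalIntegrable g volume a m := hg.mono_set (uIcc_subset_uIcc_left hm')
  have hg₂ : IntervalIntegrable g volume m b := hg.mono_set (uIcc_subset_uIcc_right hm')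
  have hsplit : ∀ e, ∫ ω in a..b, |g ω - e| = (∫ ω in a..m, |g ω - e|) + ∫ ω in m..b, |g ω - e| :=
    fun e => (intervalIntegral.integral_add_adjacent_intervals
      (hg₁.sub intervalIntegrable_const).abs (hg₂.sub intervalIntegrable_const).abs).symm
  have hlow := integral_abs_sub_add_le_of_le (c := c) ham.le hg₁
    fun ω hω => hmono ⟨hω.1, hω.2.trans hmb⟩ hm hω.2.le
  have hhigh := integral_abs_sub_add_le_of_ge (c := c) hmb.le hg₂
    fun ω hω => hmono hm ⟨ham.trans hω.1, hω.2⟩ hω.1.le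
  rw [hsplit, hsplit]
  have hcancel : (m - a) * (c - g m) + (b - m) * (g m - c) = 0 := by rw [hm_def]; ring
  linarith

end MedianMinimizesL1

section UniformGrid

variable {N : ℕ}

lemma Fin.cast_div_lt_cast_succ_div (k : Fin N) : (k : ℝ) / N < (k + 1) / N :=
  div_lt_div_of_pos_right (lt_add_one _) (by exact_mod_cast k.pos)

lemma Fin.cast_succ_div_le_one (k : Fin N) : ((k : ℝ) + 1) / N ≤ 1 :=
  div_le_one_of_le₀ (by exact_mod_cast k.isLt) (Nat.cast_nonneg _)

lemma Fin.uIcc_cast_div_subset (k : Fin N) : uIcc ((k : ℝ) / N) ((k + 1) / N) ⊆ uIcc 0 1 :=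
  uIcc_subset_uIcc
    (mem_uIcc_of_le (by positivity) (k.cast_div_lt_cast_succ_div.le.trans k.cast_succ_div_le_one))
    (mem_uIcc_of_le (by positivity) k.cast_succ_div_le_one)

lemma Fin.Ioo_cast_div_subset (k : Fin N) : Ioo ((k : ℝ) / N) ((k + 1) / N) ⊆ Ioo 0 1 :=
  Ioo_subset_Ioo (by positivity) k.cast_succ_div_le_one

lemma integral_zero_one_eq_sum_fin {f : ℝ → ℝ} (hN : 0 < N)
    (hf : ∀ k : Fin N, IntervalIntegrable f volume ((k : ℝ) / N) ((k + 1) / N)) :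
    ∫ ω in (0 : ℝ)..1, f ω = ∑ k : Fin N, ∫ ω in (k : ℝ) / N..(k + 1) / N, f ω := by
  have h := intervalIntegral.sum_integral_adjacent_intervals (f := f) (μ := volume)
    (a := fun k : ℕ => (k : ℝ) / N) (n := N) fun k hk => by simpa using hf ⟨k, hk⟩
  simp only [Nat.cast_zero, zero_div, div_self (Nat.cast_ne_zero.mpr hN.ne' : (N : ℝ) ≠ 0),
    Nat.cast_add, Nat.cast_one] at h
  rw [← h, Fin.sum_univ_eq_sum_range (fun k : ℕ => ∫ ω in (k : ℝ) / N..(k + 1) / N, f ω)]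

end UniformGrid

lemma W1_quantDist_eq_sum {μ : Measure ℝ} [IsProbabilityMeasure μ]
    (hint : Integrable (fun x : ℝ => x) μ) {N : ℕ} (hN : 0 < N) {c : Fin N → ℝ}
    (hc : Monotone c) :
    W1 μ (quantDist c) = ∑ k : Fin N, ∫ ω in (k : ℝ) / N..(k + 1) / N, |quantileFn μ ω - c k| := by
  have hstep : ∀ k : Fin N, EqOn (fun ω => |quantileFn μ ω - c k|)
      (fun ω => |quantileFn μ ω - quantileFn (quantDist c) ω|) (uIoc ((k : ℝ) / N) ((k + 1) / N)) :=
    fun k ω hω => by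
      rw [uIoc_of_le k.cast_div_lt_cast_succ_div.le] at hω
      simp only [quantileFn_quantDist hc k hω]
  have hpiece : ∀ k : Fin N,
      IntervalIntegrable (fun ω => |quantileFn μ ω - c k|) volume ((k : ℝ) / N) ((k + 1) / N) :=
    fun k => (((intervalIntegrable_quantileFn hint).mono_set k.uIcc_cast_div_subset).sub
      intervalIntegrable_const).abs
  rw [W1, integral_zero_one_eq_sum_fin hN fun k => (hpiece k).congr (hstep k)]
  exact Finset.sum_congr rfl fun k _ =>
    intervalIntegral.integral_congr_ae (ae_of_all _ fun ω hω => (hstep k hω).symm)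

lemma two_mul_add_one_div_two_mul (x n : ℝ) :
    (2 * x + 1) / (2 * n) = (x / n + (x + 1) / n) / 2 := by
  ring

/-- `i : Fin N` is 0-indexed, so the paper's `(2i - 1)/(2N)` reads `(2i + 1)/(2N)` here. -/
theorem quantile_projection_minimizes_W1_general
    (μ : Measure ℝ) [IsProbabilityMeasure μ] (hint : Integrable (fun x : ℝ => x) μ)
    (N : ℕ) (θ : Fin N → ℝ) :
    W1 μ (quantDist fun i : Fin N => quantileFn μ ((2 * (i : ℝ) + 1) / (2 * N)))
      ≤ W1 μ (quantDist θ) := by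
  rcases N.eq_zero_or_pos with rfl | hN
  · exact le_of_eq (congrArg (W1 μ ∘ quantDist) (Subsingleton.elim _ _))
  have hmid_mem : ∀ k : Fin N, (2 * (k : ℝ) + 1) / (2 * N) ∈ Ioo 0 1 := fun k => by
    rw [two_mul_add_one_div_two_mul]
    exact k.Ioo_cast_div_subset ⟨left_lt_add_div_two.2 k.cast_div_lt_cast_succ_div,
      add_div_two_lt_right.2 k.cast_div_lt_cast_succ_div⟩
  have hmono : Monotone fun k : Fin N => quantileFn μ ((2 * (k : ℝ) + 1) / (2 * N)) :=
    fun i j hij => quantileFn_monotoneOn (hmid_mem i) (hmid_mem j) (by gcongr; exact_mod_cast hij)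
  rw [← quantDist_comp_perm θ (Tuple.sort θ), W1_quantDist_eq_sum hint hN hmono,
    W1_quantDist_eq_sum hint hN (Tuple.monotone_sort θ)]
  refine Finset.sum_le_sum fun k _ => ?_
  rw [two_mul_add_one_div_two_mul]
  exact integral_abs_sub_midpoint_le k.cast_div_lt_cast_succ_div
    (quantileFn_monotoneOn.mono k.Ioo_cast_div_subset)
    ((intervalIntegrable_quantileFn hint).mono_set k.uIcc_cast_div_subset)

/-- the quantile distribution with atoms at the quantile midpoints
`F_μ⁻¹((2i-1)/(2N))` minimizes the 1-Wasserstein distance to `μ` over all uniform mixtures of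
`N` Diracs. (Here `i : Fin N` is 0-indexed, so the midpoint is `(2i+1)/(2N)`.) -/
theorem quantile_projection_minimizes_W1
    (μ : Measure ℝ) [IsProbabilityMeasure μ] (hint : Integrable (fun x : ℝ => x) μ)
    (N : ℕ) (hN : 1 ≤ N) (θ : Fin N → ℝ) :
    W1 μ (quantDist fun i : Fin N => quantileFn μ ((2 * (i : ℝ) + 1) / (2 * N)))
      ≤ W1 μ (quantDist θ) :=
  quantile_projection_minimizes_W1_general μ hint N θ
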